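/- Let μ be the self-similar measure generated by the 2ℓ maps S_i. For every ℓ-adic interval I, at least one of the following holds: (i) μ(I)μ(J) ≤ 2 μ(IJ) for all ℓ-adic intervals J; or (ii) μ(I) μ(T(J)) ≤ 2 μ(IJ) for all ℓ-adic intervals J, where T(x) = 1 − x and IJ denotes the concatenated interval I ∩ σ^{−n}(J) with n the generation of I. -/

import Mathlib

open MeasureTheory Filter Topology ENNReal

noncomputable section

/-- The ℓ-adic interval of generation `n` with index `k`. -/
def adicI (ℓ n k : ℕ) : Set ℝ := Set.Ico ((k : ℝ) / ℓ ^ n) ((k + 1 : ℝ) / ℓ ^ n)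

/-- The mass of a set for a measure, as a real number. -/
def mss (μ : Measure ℝ) (s : Set ℝ) : ℝ := (μ s).toReal

/-- The `2ℓ` similitudes of ratio `±1/ℓ`. -/
def simMapT (ℓ i : ℕ) (x : ℝ) : ℝ :=
  if i < ℓ then x / ℓ + i / ℓ else -x / ℓ + ((i - ℓ + 1 : ℕ) : ℝ) / ℓ

/-- The reflection `T(x) = 1 - x`. -/
def refl1 (x : ℝ) : ℝ := 1 - x

/-- The measure `ν = (μ + μ ∘ T)/2`. -/
def nuT (μ : Measure ℝ) : Measure ℝ := (2 : ℝ≥0∞)⁻¹ • (μ + μ.map refl1)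

/-- Partition-function sequence `u_n = ∑_{I ∈ F_n, m(I) ≠ 0} m(I)^q`. -/
def uSeq (ℓ : ℕ) (μ : Measure ℝ) (q : ℝ) (n : ℕ) : ℝ :=
  ∑ k ∈ (Finset.range (ℓ ^ n)).filter (fun k => mss μ (adicI ℓ n k) ≠ 0),
    mss μ (adicI ℓ n k) ^ q

/-- The `L^q`-spectrum `τ(q)` of a measure, defined with a `limsup`. -/
def Lsp (ℓ : ℕ) (μ : Measure ℝ) (q : ℝ) : ℝ :=
  limsup (fun n : ℕ => Real.log (uSeq ℓ μ q n) / (n * Real.log ℓ)) atTop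

/-- `‖M‖₁`: the sum of the first-row entries. -/
def normOne (M : Matrix (Fin 2) (Fin 2) ℝ) : ℝ := M 0 0 + M 0 1

/-- `‖M‖`: half of the sum of all entries. -/
def normH2 (M : Matrix (Fin 2) (Fin 2) ℝ) : ℝ := (M 0 0 + M 0 1 + M 1 0 + M 1 1) / 2

/-- The matrix `M_ε`. -/
def MmatT (ℓ : ℕ) (p : ℕ → ℝ) (ε : ℕ) : Matrix (Fin 2) (Fin 2) ℝ :=
  !![p ε, p (ε + ℓ); p (2 * ℓ - 1 - ε), p (ℓ - 1 - ε)]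

/-- The ℓ-adic interval `I_{ε₁⋯ε_n}` associated with a word. -/
def wordI (ℓ n : ℕ) (ε : Fin n → ℕ) : Set ℝ :=
  Set.Ico (∑ i : Fin n, (ε i : ℝ) / ℓ ^ ((i : ℕ) + 1))
    (∑ i : Fin n, (ε i : ℝ) / ℓ ^ ((i : ℕ) + 1) + 1 / ℓ ^ n)

/-- The ℓ-adic shift `σ(x) = ℓx (mod 1)`. -/
def shiftM (ℓ : ℕ) (x : ℝ) : ℝ := Int.fract (ℓ * x)

/-- `I_n(x)`: the ℓ-adic interval of generation `n` containing `x`. -/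
def Iofx (ℓ n : ℕ) (x : ℝ) : Set ℝ := adicI ℓ n (⌊(ℓ : ℝ) ^ n * x⌋).toNat

/-- The level set `E_α(m)` of points of `[0,1)` with local dimension `α`. -/
def ESet (ℓ : ℕ) (μ : Measure ℝ) (α : ℝ) : Set ℝ :=
  {x ∈ Set.Ico (0 : ℝ) 1 |
    Tendsto (fun n : ℕ => -Real.log (mss μ (Iofx ℓ n x)) / (n * Real.log ℓ)) atTop (𝓝 α)}

/-!
Write `D_j x = (j + x) / ℓ` for the ℓ-adic digit maps, so that `S_j = D_j` and `S_{ℓ+j} = D_j ∘ T`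
for `j < ℓ`. The maps send `[-ℓR, 1 + ℓR]` into `[-R, 1 + R]`, which forces `μ` to live on `[0,1]`;
the two fixed-point equations for the masses of `0` and `1` then show that `μ` has no atoms there,
thanks to `p_0 + p_ℓ > 0` and `p_{ℓ-1} + p_{2ℓ-1} > 0`. Once `μ` is carried by `(0,1)`, the
self-similarity equation evaluated on `D_j(A)`, `A ⊆ [0,1]`, only sees `S_j` and `S_{ℓ+j}`:
`μ(D_j A) = p_j μ(A) + p_{ℓ+j} μ(T A)`. As `T ∘ D_j = D_{ℓ-1-j} ∘ T`, peeling off the digits of an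
ℓ-adic interval `I` one at a time gives `a, b ≥ 0` with `μ(IJ) = a μ(J) + b μ(T J)` for every `J`.
In particular `μ(I) = a + b`, so (i) holds if `a ≥ b` and (ii) holds if `b ≥ a`.
-/

open Set

/-- `adicMap ℓ 1 j` is the digit map `D_j`. -/
def adicMap (ℓ n k : ℕ) (x : ℝ) : ℝ := (k + x) / ℓ ^ n

def IsSelfSimilar (ℓ : ℕ) (p : ℕ → ℝ) (μ : Measure ℝ) : Prop :=
  μ = ∑ i ∈ Finset.range (2 * ℓ), ENNReal.ofReal (p i) • μ.map (simMapT ℓ i)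

lemma refl1_involutive : Function.Involutive refl1 := sub_sub_cancel 1

lemma refl1_image (s : Set ℝ) : refl1 '' s = refl1 ⁻¹' s :=
  congrFun refl1_involutive.image_eq_preimage_symm s

lemma measurableEmbedding_refl1 : MeasurableEmbedding refl1 :=
  Measurable.measurableEmbedding (by unfold refl1; fun_prop) refl1_involutive.injective

lemma mapsTo_refl1_Icc (R : ℝ) : MapsTo refl1 (Icc (-R) (1 + R)) (Icc (-R) (1 + R)) :=
  fun x hx => ⟨by simp only [refl1]; linarith [hx.2], by simp only [refl1]; linarith [hx.1]⟩

lemma mapsTo_refl1_Ioo : MapsTo refl1 (Ioo 0 1) (Ioo 0 1) :=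
  fun x hx => ⟨by simp only [refl1]; linarith [hx.2], by simp only [refl1]; linarith [hx.1]⟩

lemma refl1_preimage_subset_Icc {s : Set ℝ} (hs : s ⊆ Icc 0 1) : refl1 ⁻¹' s ⊆ Icc 0 1 := by
  have h := mapsTo_refl1_Icc 0
  rw [neg_zero, add_zero] at h
  rw [← refl1_image]
  exact (h.mono_left hs).image_subset

lemma natCast_eq_of_add_eq {i j : ℕ} {x y : ℝ} (hx : x ∈ Ioo 0 1) (hy : y ∈ Icc 0 1)
    (h : (i : ℝ) + x = j + y) : i = j := by
  rcases lt_trichotomy i j with hij | hij | hij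
  · have : (i : ℝ) + 1 ≤ j := by exact_mod_cast hij
    linarith [hx.2, hy.1]
  · exact hij
  · have : (j : ℝ) + 1 ≤ i := by exact_mod_cast hij
    linarith [hx.1, hy.2]

section adicMap

variable {ℓ : ℕ}

lemma adicMap_injective (hℓ : 0 < ℓ) (n k : ℕ) : Function.Injective (adicMap ℓ n k) := by
  intro x y h
  have : (ℓ : ℝ) ^ n ≠ 0 := by positivity
  simpa [adicMap, div_left_inj' this] using h

lemma measurableEmbedding_adicMap (hℓ : 0 < ℓ) (n k : ℕ) : MeasurableEmbedding (adicMap ℓ n k) :=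
  Measurable.measurableEmbedding (by unfold adicMap; fun_prop) (adicMap_injective hℓ n k)

lemma simMapT_of_lt {j : ℕ} (hj : j < ℓ) : simMapT ℓ j = adicMap ℓ 1 j := by
  ext x
  simp only [simMapT, adicMap, hj, if_true, pow_one]
  ring

lemma simMapT_add (j : ℕ) : simMapT ℓ (ℓ + j) = adicMap ℓ 1 j ∘ refl1 := by
  ext x
  simp [simMapT, adicMap, refl1]
  ring

lemma refl1_comp_adicMap_one {j : ℕ} (hj : j < ℓ) :
    refl1 ∘ adicMap ℓ 1 j = adicMap ℓ 1 (ℓ - 1 - j) ∘ refl1 := by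
  have hℓ : (ℓ : ℝ) ≠ 0 := Nat.cast_ne_zero.2 (by omega)
  ext x
  simp only [Function.comp, refl1, adicMap, pow_one, Nat.cast_sub (by omega : j ≤ ℓ - 1),
    Nat.cast_sub (by omega : 1 ≤ ℓ), Nat.cast_one]
  field_simp
  ring

lemma refl1_preimage_image_adicMap_one {j : ℕ} (hj : j < ℓ) (s : Set ℝ) :
    refl1 ⁻¹' (adicMap ℓ 1 j '' s) = adicMap ℓ 1 (ℓ - 1 - j) '' (refl1 ⁻¹' s) := by
  rw [← refl1_image, ← refl1_image, image_image, image_image]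
  exact congrFun (congrArg image (refl1_comp_adicMap_one hj)) s

lemma adicMap_succ (hℓ : 0 < ℓ) (n k j : ℕ) :
    adicMap ℓ (n + 1) (ℓ * k + j) = adicMap ℓ n k ∘ adicMap ℓ 1 j := by
  have : (ℓ : ℝ) ≠ 0 := by positivity
  ext x
  simp only [Function.comp, adicMap, pow_succ, Nat.cast_add, Nat.cast_mul]
  field_simp
  ring

lemma adicI_add_eq_image (hℓ : 0 < ℓ) (n q k m : ℕ) :
    adicI ℓ (n + q) (k * ℓ ^ q + m) = adicMap ℓ n k '' adicI ℓ q m := by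
  have : (ℓ : ℝ) ≠ 0 := by positivity
  have h : adicMap ℓ n k = fun x => ((ℓ : ℝ) ^ n)⁻¹ * x + k / ℓ ^ n := by
    ext x; simp only [adicMap]; ring
  rw [h, adicI, adicI, image_affine_Ico (by positivity)]
  congr 1 <;> (push_cast; field_simp; ring)

lemma adicI_subset_Icc {q m : ℕ} (hm : m < ℓ ^ q) : adicI ℓ q m ⊆ Icc 0 1 := by
  have hm' : (m : ℝ) + 1 ≤ (ℓ : ℝ) ^ q := by exact_mod_cast hm
  rintro x ⟨hx₁, hx₂⟩
  have hq : (0 : ℝ) < ℓ ^ q := by linarith [m.cast_nonneg (α := ℝ)]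
  refine ⟨le_trans (by positivity) hx₁, hx₂.le.trans ?_⟩
  rwa [div_le_one hq]

lemma mapsTo_adicMap_one_Icc {j : ℕ} (hj : j < ℓ) (R : ℝ) :
    MapsTo (adicMap ℓ 1 j) (Icc (-(ℓ * R)) (1 + ℓ * R)) (Icc (-R) (1 + R)) := by
  have hj' : (j : ℝ) + 1 ≤ ℓ := by exact_mod_cast hj
  have hℓ : (0 : ℝ) < ℓ := by linarith [j.cast_nonneg (α := ℝ)]
  rintro x ⟨hx₁, hx₂⟩
  simp only [adicMap, pow_one, mem_Icc, le_div_iff₀ hℓ, div_le_iff₀ hℓ]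
  constructor <;> nlinarith [j.cast_nonneg (α := ℝ)]

lemma adicMap_one_preimage_singleton (hℓ : 0 < ℓ) (j : ℕ) (y : ℝ) :
    adicMap ℓ 1 j ⁻¹' {y} = {ℓ * y - j} := by
  have : (ℓ : ℝ) ≠ 0 := by positivity
  ext x
  simp only [mem_preimage, mem_singleton_iff, adicMap, pow_one, div_eq_iff this]
  constructor <;> intro h <;> linarith

lemma adicMap_one_preimage_image_subset (hℓ : 0 < ℓ) {i j : ℕ} (hij : i ≠ j) {s : Set ℝ}
    (hs : s ⊆ Icc 0 1) : adicMap ℓ 1 i ⁻¹' (adicMap ℓ 1 j '' s) ⊆ (Ioo 0 1)ᶜ := by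
  have : (ℓ : ℝ) ≠ 0 := by positivity
  rintro x ⟨y, hy, hxy⟩ hx
  simp only [adicMap, pow_one, div_left_inj' this] at hxy
  exact hij (natCast_eq_of_add_eq hx (hs hy) hxy.symm)

end adicMap

lemma eq_zero_of_eq_mul_add_mul {u v a b c d : ℝ} (hu : 0 ≤ u) (hv : 0 ≤ v) (hb : 0 ≤ b)
    (hd : 0 ≤ d) (hab : 0 < a + b) (hcd : 0 < c + d) (habcd : a + b + c + d ≤ 1)
    (h₁ : u = a * u + b * v) (h₂ : v = c * v + d * u) : u = 0 ∧ v = 0 := by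
  rcases le_total v u with h | h
  · have : u ≤ 0 := by nlinarith [mul_le_mul_of_nonneg_left h hb]
    constructor <;> linarith
  · have : v ≤ 0 := by nlinarith [mul_le_mul_of_nonneg_left h hd]
    constructor <;> linarith

lemma add_mul_le_two_mul_add {a b x y : ℝ≥0∞} (h : b ≤ a) : (a + b) * x ≤ 2 * (a * x + b * y) :=
  calc (a + b) * x ≤ (a + a) * x := by gcongr
    _ = 2 * (a * x) := by ring
    _ ≤ 2 * (a * x + b * y) := by gcongr; exact le_self_add

lemma mss_mul_le_two_mul {μ : Measure ℝ} [IsFiniteMeasure μ] {s t u : Set ℝ}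
    (h : μ s * μ t ≤ 2 * μ u) : mss μ s * mss μ t ≤ 2 * mss μ u := by
  have := ENNReal.toReal_mono (ENNReal.mul_ne_top ENNReal.ofNat_ne_top (measure_ne_top μ u)) h
  simpa only [mss, ENNReal.toReal_mul, ENNReal.toReal_ofNat] using this

lemma measure_eq_one_of_Ioo_subset {μ : Measure ℝ} [IsProbabilityMeasure μ]
    (hμ : μ (Ioo 0 1)ᶜ = 0) {s : Set ℝ} (hs : Ioo 0 1 ⊆ s) : μ s = 1 :=
  le_antisymm prob_le_one ((prob_compl_eq_zero_iff measurableSet_Ioo).1 hμ ▸ measure_mono hs)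

lemma sum_ofReal_add_ofReal_eq_one {ℓ : ℕ} {p : ℕ → ℝ} (hp : ∀ i, 0 ≤ p i)
    (hsum : ∑ i ∈ Finset.range (2 * ℓ), p i = 1) :
    ∑ j ∈ Finset.range ℓ, (ENNReal.ofReal (p j) + ENNReal.ofReal (p (ℓ + j))) = 1 := by
  rw [Finset.sum_add_distrib, ← Finset.sum_range_add (fun i => ENNReal.ofReal (p i)), ← two_mul,
    ← ENNReal.ofReal_sum_of_nonneg fun i _ => hp i, hsum, ENNReal.ofReal_one]

namespace IsSelfSimilar

variable {ℓ : ℕ} {p : ℕ → ℝ} {μ : Measure ℝ}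

lemma measure_eq_sum (hself : IsSelfSimilar ℓ p μ) (hℓ : 0 < ℓ) (s : Set ℝ) :
    μ s = ∑ j ∈ Finset.range ℓ, (ENNReal.ofReal (p j) * μ (adicMap ℓ 1 j ⁻¹' s) +
      ENNReal.ofReal (p (ℓ + j)) * μ (refl1 ⁻¹' (adicMap ℓ 1 j ⁻¹' s))) := by
  conv_lhs => rw [hself]
  rw [Measure.finsetSum_apply, two_mul, Finset.sum_range_add, ← Finset.sum_add_distrib]
  refine Finset.sum_congr rfl fun j hj => ?_
  have hj : j < ℓ := Finset.mem_range.1 hj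
  have hD := measurableEmbedding_adicMap hℓ 1 j
  rw [Measure.smul_apply, Measure.smul_apply, simMapT_of_lt hj, simMapT_add, hD.map_apply,
    (hD.comp measurableEmbedding_refl1).map_apply]
  rfl

lemma measure_compl_Icc_le (hself : IsSelfSimilar ℓ p μ) (hℓ : 0 < ℓ) (hp : ∀ i, 0 ≤ p i)
    (hsum : ∑ i ∈ Finset.range (2 * ℓ), p i = 1) (R : ℝ) :
    μ (Icc (-R) (1 + R))ᶜ ≤ μ (Icc (-(ℓ * R)) (1 + ℓ * R))ᶜ := by
  set t := (Icc (-(ℓ * R)) (1 + ℓ * R))ᶜ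
  calc μ (Icc (-R) (1 + R))ᶜ
      = ∑ j ∈ Finset.range ℓ, (ENNReal.ofReal (p j) * μ (adicMap ℓ 1 j ⁻¹' (Icc (-R) (1 + R))ᶜ) +
          ENNReal.ofReal (p (ℓ + j)) * μ (refl1 ⁻¹' (adicMap ℓ 1 j ⁻¹' (Icc (-R) (1 + R))ᶜ))) :=
        hself.measure_eq_sum hℓ _
    _ ≤ ∑ j ∈ Finset.range ℓ, (ENNReal.ofReal (p j) + ENNReal.ofReal (p (ℓ + j))) * μ t := by
        gcongr with j hj
        have hD := mapsTo_adicMap_one_Icc (Finset.mem_range.1 hj) R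
        rw [add_mul]
        gcongr
        · exact compl_subset_compl.2 hD
        · exact compl_subset_compl.2 (hD.comp (mapsTo_refl1_Icc _))
    _ = μ t := by rw [← Finset.sum_mul, sum_ofReal_add_ofReal_eq_one hp hsum, one_mul]

lemma measure_compl_Icc_eq_zero [IsFiniteMeasure μ] (hself : IsSelfSimilar ℓ p μ) (hℓ : 2 ≤ ℓ)
    (hp : ∀ i, 0 ≤ p i) (hsum : ∑ i ∈ Finset.range (2 * ℓ), p i = 1) {δ : ℝ} (hδ : 0 < δ) :
    μ (Icc (-δ) (1 + δ))ᶜ = 0 := by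
  have hℓ₁ : (1 : ℝ) < ℓ := by exact_mod_cast hℓ
  set s : ℕ → Set ℝ := fun n => (Icc (-(ℓ ^ n * δ)) (1 + ℓ ^ n * δ))ᶜ
  have hle : ∀ n, μ (s 0) ≤ μ (s n) := by
    intro n
    induction n with
    | zero => rfl
    | succ n ih =>
      refine ih.trans ?_
      simpa only [s, pow_succ', mul_assoc] using
        hself.measure_compl_Icc_le (by omega) hp hsum ((ℓ : ℝ) ^ n * δ)
  have hanti : Antitone s := fun m n hmn => compl_subset_compl.2 <| by
    have : (ℓ : ℝ) ^ m * δ ≤ ℓ ^ n * δ := by gcongr; exact hℓ₁.le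
    exact Icc_subset_Icc (by linarith) (by linarith)
  have hempty : ⋂ n, s n = ∅ := by
    refine eq_empty_of_forall_notMem fun x hx => ?_
    obtain ⟨n, hn⟩ := pow_unbounded_of_one_lt (|x| / δ) hℓ₁
    have hn' : |x| < ℓ ^ n * δ := by rwa [div_lt_iff₀ hδ] at hn
    exact mem_iInter.1 hx n ⟨by linarith [neg_abs_le x], by linarith [le_abs_self x]⟩
  have hlim := tendsto_measure_iInter_atTop (μ := μ)
    (fun _ => measurableSet_Icc.compl.nullMeasurableSet) hanti ⟨0, measure_ne_top μ _⟩
  rw [hempty, measure_empty] at hlim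
  simpa [s] using le_zero_iff.1 (ge_of_tendsto' hlim hle)

lemma measure_compl_Icc_zero_one [IsFiniteMeasure μ] (hself : IsSelfSimilar ℓ p μ) (hℓ : 2 ≤ ℓ)
    (hp : ∀ i, 0 ≤ p i) (hsum : ∑ i ∈ Finset.range (2 * ℓ), p i = 1) :
    μ (Icc 0 1)ᶜ = 0 := by
  have hcover : (Icc (0 : ℝ) 1)ᶜ ⊆ ⋃ n : ℕ, (Icc (-(1 / (n + 1))) (1 + 1 / (n + 1)))ᶜ := by
    intro x hx
    simp only [mem_compl_iff, mem_Icc, not_and_or, not_le] at hx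
    rcases hx with hx | hx
    · obtain ⟨n, hn⟩ := exists_nat_one_div_lt (neg_pos.2 hx)
      exact mem_iUnion.2 ⟨n, fun h => by linarith [h.1]⟩
    · obtain ⟨n, hn⟩ := exists_nat_one_div_lt (sub_pos.2 hx)
      exact mem_iUnion.2 ⟨n, fun h => by linarith [h.2]⟩
  exact measure_mono_null hcover <|
    measure_iUnion_null fun n => hself.measure_compl_Icc_eq_zero hℓ hp hsum (by positivity)

lemma measure_singleton_zero (hself : IsSelfSimilar ℓ p μ) (hℓ : 0 < ℓ)
    (hc : μ (Icc 0 1)ᶜ = 0) :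
    μ {0} = ENNReal.ofReal (p 0) * μ {0} + ENNReal.ofReal (p ℓ) * μ {1} := by
  conv_lhs => rw [hself.measure_eq_sum hℓ]
  simp only [adicMap_one_preimage_singleton hℓ, ← refl1_image, image_singleton, refl1]
  rw [Finset.sum_eq_single 0]
  · simp
  · intro j _ hj
    have hj' : (1 : ℝ) ≤ j := by exact_mod_cast Nat.one_le_iff_ne_zero.2 hj
    have h₁ : μ {(ℓ : ℝ) * 0 - j} = 0 :=
      measure_mono_null (singleton_subset_iff.2 fun h => by linarith [h.1]) hc
    have h₂ : μ {1 - ((ℓ : ℝ) * 0 - j)} = 0 :=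
      measure_mono_null (singleton_subset_iff.2 fun h => by linarith [h.2]) hc
    rw [h₁, h₂, mul_zero, mul_zero, add_zero]
  · exact fun h => absurd (Finset.mem_range.2 hℓ) h

lemma measure_singleton_one (hself : IsSelfSimilar ℓ p μ) (hℓ : 0 < ℓ)
    (hc : μ (Icc 0 1)ᶜ = 0) :
    μ {1} = ENNReal.ofReal (p (ℓ - 1)) * μ {1} + ENNReal.ofReal (p (ℓ + (ℓ - 1))) * μ {0} := by
  conv_lhs => rw [hself.measure_eq_sum hℓ]
  simp only [adicMap_one_preimage_singleton hℓ, ← refl1_image, image_singleton, refl1]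
  rw [Finset.sum_eq_single (ℓ - 1)]
  · simp [Nat.cast_sub (Nat.one_le_iff_ne_zero.2 hℓ.ne')]
  · intro j hj hj'
    have hj₂ : (j : ℝ) + 2 ≤ ℓ := by exact_mod_cast (by grind : j + 2 ≤ ℓ)
    have h₁ : μ {(ℓ : ℝ) * 1 - j} = 0 :=
      measure_mono_null (singleton_subset_iff.2 fun h => by linarith [h.2]) hc
    have h₂ : μ {1 - ((ℓ : ℝ) * 1 - j)} = 0 :=
      measure_mono_null (singleton_subset_iff.2 fun h => by linarith [h.1]) hc
    rw [h₁, h₂, mul_zero, mul_zero, add_zero]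
  · exact fun h => absurd (Finset.mem_range.2 (by omega)) h

lemma measure_singleton_zero_and_one [IsFiniteMeasure μ] (hself : IsSelfSimilar ℓ p μ)
    (hℓ : 2 ≤ ℓ) (hp : ∀ i, 0 ≤ p i) (hsum : ∑ i ∈ Finset.range (2 * ℓ), p i = 1)
    (hpos : ∀ i < ℓ, 0 < p i + p (i + ℓ)) (hc : μ (Icc 0 1)ᶜ = 0) :
    μ {0} = 0 ∧ μ {1} = 0 := by
  have hℓ₀ : 0 < ℓ := by omega
  have hfin : ∀ (c : ℝ) (s : Set ℝ), ENNReal.ofReal c * μ s ≠ ⊤ :=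
    fun c s => ENNReal.mul_ne_top ENNReal.ofReal_ne_top (measure_ne_top μ s)
  have h₀ := congrArg ENNReal.toReal (hself.measure_singleton_zero hℓ₀ hc)
  have h₁ := congrArg ENNReal.toReal (hself.measure_singleton_one hℓ₀ hc)
  simp only [ENNReal.toReal_add (hfin _ _) (hfin _ _), ENNReal.toReal_mul,
    ENNReal.toReal_ofReal (hp _)] at h₀ h₁
  have hweights : p 0 + p ℓ + (p (ℓ - 1) + p (ℓ + (ℓ - 1))) ≤ 1 := by
    rw [← hsum, two_mul, Finset.sum_range_add, ← Finset.sum_add_distrib]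
    exact Finset.add_le_sum (fun i _ => add_nonneg (hp i) (hp (ℓ + i)))
      (Finset.mem_range.2 hℓ₀) (Finset.mem_range.2 (by omega)) (by omega)
  obtain ⟨hu, hv⟩ := eq_zero_of_eq_mul_add_mul ENNReal.toReal_nonneg ENNReal.toReal_nonneg
    (hp _) (hp _) (by simpa using hpos 0 hℓ₀) (by rw [add_comm ℓ]; exact hpos _ (by omega))
    (by linarith) h₀ h₁
  simpa [ENNReal.toReal_eq_zero_iff, measure_ne_top] using And.intro hu hv

lemma measure_compl_Ioo_zero_one [IsFiniteMeasure μ] (hself : IsSelfSimilar ℓ p μ) (hℓ : 2 ≤ ℓ)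
    (hp : ∀ i, 0 ≤ p i) (hsum : ∑ i ∈ Finset.range (2 * ℓ), p i = 1)
    (hpos : ∀ i < ℓ, 0 < p i + p (i + ℓ)) :
    μ (Ioo 0 1)ᶜ = 0 := by
  have hc := hself.measure_compl_Icc_zero_one hℓ hp hsum
  obtain ⟨h₀, h₁⟩ := hself.measure_singleton_zero_and_one hℓ hp hsum hpos hc
  have hsub : (Ioo (0 : ℝ) 1)ᶜ ⊆ (Icc 0 1)ᶜ ∪ ({0} ∪ {1}) := by
    rw [← insert_eq, ← Icc_sdiff_Ioo_same zero_le_one]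
    intro x hx
    by_cases h : x ∈ Icc (0 : ℝ) 1
    · exact Or.inr ⟨h, hx⟩
    · exact Or.inl h
  exact measure_mono_null hsub (measure_union_null hc (measure_union_null h₀ h₁))

lemma measure_image_adicMap_one (hself : IsSelfSimilar ℓ p μ) (hℓ : 0 < ℓ)
    (hμ : μ (Ioo 0 1)ᶜ = 0) {j : ℕ} (hj : j < ℓ) {s : Set ℝ} (hs : s ⊆ Icc 0 1) :
    μ (adicMap ℓ 1 j '' s) =
      ENNReal.ofReal (p j) * μ s + ENNReal.ofReal (p (ℓ + j)) * μ (refl1 ⁻¹' s) := by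
  rw [hself.measure_eq_sum hℓ, Finset.sum_eq_single j,
    (adicMap_injective hℓ 1 j).preimage_image]
  · intro i _ hij
    have h := adicMap_one_preimage_image_subset hℓ hij hs
    have h' : refl1 ⁻¹' (adicMap ℓ 1 i ⁻¹' (adicMap ℓ 1 j '' s)) ⊆ (Ioo 0 1)ᶜ :=
      fun x hx hx' => h hx (mapsTo_refl1_Ioo hx')
    rw [measure_mono_null h hμ, measure_mono_null h' hμ, mul_zero, mul_zero, add_zero]
  · exact fun h => absurd (Finset.mem_range.2 hj) h

lemma exists_measure_image_adicMap (hself : IsSelfSimilar ℓ p μ) (hℓ : 0 < ℓ)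
    (hμ : μ (Ioo 0 1)ᶜ = 0) (n : ℕ) :
    ∀ k < ℓ ^ n, ∃ a b : ℝ≥0∞, ∀ s ⊆ Icc 0 1,
      μ (adicMap ℓ n k '' s) = a * μ s + b * μ (refl1 ⁻¹' s) := by
  induction n with
  | zero =>
    intro k hk
    obtain rfl : k = 0 := by simpa using hk
    have h : adicMap ℓ 0 0 = id := funext fun x => by simp [adicMap]
    exact ⟨1, 0, fun s _ => by simp [h]⟩
  | succ n ih =>
    intro k hk
    obtain ⟨k', j, hj, hk', rfl⟩ : ∃ k' j, j < ℓ ∧ k' < ℓ ^ n ∧ k = ℓ * k' + j :=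
      ⟨k / ℓ, k % ℓ, Nat.mod_lt _ hℓ, Nat.div_lt_of_lt_mul (by rwa [← pow_succ']),
        (Nat.div_add_mod k ℓ).symm⟩
    obtain ⟨a, b, hmass⟩ := ih k' hk'
    refine ⟨a * ENNReal.ofReal (p j) + b * ENNReal.ofReal (p (ℓ + (ℓ - 1 - j))),
      a * ENNReal.ofReal (p (ℓ + j)) + b * ENNReal.ofReal (p (ℓ - 1 - j)), fun s hs => ?_⟩
    have hDs : adicMap ℓ 1 j '' s ⊆ Icc 0 1 := by
      simpa using ((mapsTo_adicMap_one_Icc hj 0).mono_left (by simpa using hs)).image_subset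
    rw [adicMap_succ hℓ, image_comp, hmass _ hDs, refl1_preimage_image_adicMap_one hj,
      hself.measure_image_adicMap_one hℓ hμ hj hs,
      hself.measure_image_adicMap_one hℓ hμ (by omega) (refl1_preimage_subset_Icc hs),
      refl1_involutive.preimage s]
    ring

end IsSelfSimilar

/-- For every ℓ-adic interval `I`, either `μ(I)μ(J) ≤ 2μ(IJ)` for all `J`, or
`μ(I)μ(T(J)) ≤ 2μ(IJ)` for all `J`. -/
theorem stmt7 (ℓ : ℕ) (hℓ : 2 ≤ ℓ) (p : ℕ → ℝ) (hp : ∀ i, 0 ≤ p i)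
    (hsum : ∑ i ∈ Finset.range (2 * ℓ), p i = 1)
    (hpos : ∀ i < ℓ, 0 < p i + p (i + ℓ))
    (μ : Measure ℝ) [IsProbabilityMeasure μ]
    (hself : μ = ∑ i ∈ Finset.range (2 * ℓ), ENNReal.ofReal (p i) • μ.map (simMapT ℓ i))
    (n k : ℕ) (hk : k < ℓ ^ n) :
    (∀ (q m : ℕ), m < ℓ ^ q →
        mss μ (adicI ℓ n k) * mss μ (adicI ℓ q m) ≤
          2 * mss μ (adicI ℓ (n + q) (k * ℓ ^ q + m))) ∨
      (∀ (q m : ℕ), m < ℓ ^ q →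
        mss μ (adicI ℓ n k) * mss μ (refl1 '' adicI ℓ q m) ≤
          2 * mss μ (adicI ℓ (n + q) (k * ℓ ^ q + m))) := by
  have hℓ₀ : 0 < ℓ := by omega
  have hself' : IsSelfSimilar ℓ p μ := hself
  have hμ := hself'.measure_compl_Ioo_zero_one hℓ hp hsum hpos
  obtain ⟨a, b, hmass⟩ := hself'.exists_measure_image_adicMap hℓ₀ hμ n k hk
  have hIJ : ∀ q m, m < ℓ ^ q → μ (adicI ℓ (n + q) (k * ℓ ^ q + m)) =
      a * μ (adicI ℓ q m) + b * μ (refl1 '' adicI ℓ q m) := fun q m hm => by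
    rw [adicI_add_eq_image hℓ₀, hmass _ (adicI_subset_Icc hm), refl1_image]
  have hIoo : Ioo 0 1 ⊆ adicI ℓ 0 0 := fun x hx => by
    simpa [adicI] using And.intro hx.1.le hx.2
  have hJ₀ : μ (adicI ℓ 0 0) = 1 := measure_eq_one_of_Ioo_subset hμ hIoo
  have hTJ₀ : μ (refl1 '' adicI ℓ 0 0) = 1 := by
    rw [refl1_image]
    exact measure_eq_one_of_Ioo_subset hμ (mapsTo_refl1_Ioo.mono_right hIoo)
  have hI : μ (adicI ℓ n k) = a + b := by simpa [hJ₀, hTJ₀] using hIJ 0 0 (by simp)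
  rcases le_total b a with hba | hab
  · refine Or.inl fun q m hm => mss_mul_le_two_mul ?_
    rw [hI, hIJ q m hm]
    exact add_mul_le_two_mul_add hba
  · refine Or.inr fun q m hm => mss_mul_le_two_mul ?_
    rw [hI, hIJ q m hm, add_comm a, add_comm (a * _)]
    exact add_mul_le_two_mul_add hab
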